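/- Let G be a finite simple graph with positive real vertex weights ω, and let v be a simplicial vertex of G (i.e., N(v) is a clique) whose weight is maximum in its closed neighborhood, i.e., ω(v) ≥ ω(u) for all u ∈ N(v). Then α_ω(G) = α_ω(G − N[v]) + ω(v). -/

import Mathlib

open scoped Classical

/-- `S` is an independent set of vertices in `G`: no two members are adjacent. -/
def IsIndepSet {V : Type*} (G : SimpleGraph V) (S : Finset V) : Prop :=
  ∀ a ∈ S, ∀ b ∈ S, ¬ G.Adj a b

/-- The maximum total `w`-weight of an independent set of `G` contained in `A`
(the weighted independence number of the subgraph of `G` induced on `A`). -/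
noncomputable def alphaOn {V : Type*} [Fintype V] (G : SimpleGraph V) (w : V → ℝ)
    (A : Set V) : ℝ :=
  sSup {x : ℝ | ∃ S : Finset V, ↑S ⊆ A ∧ IsIndepSet G S ∧ x = ∑ v ∈ S, w v}

/-- The maximum total `w`-weight of an independent set of `G`. -/
noncomputable def alpha {V : Type*} [Fintype V] (G : SimpleGraph V) (w : V → ℝ) : ℝ :=
  alphaOn G w Set.univ

/-- `S` is a maximum `w`-weight independent set of `G`. -/
def IsMWIS {V : Type*} [Fintype V] (G : SimpleGraph V) (w : V → ℝ) (S : Finset V) : Prop :=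
  IsIndepSet G S ∧ ∑ v ∈ S, w v = alpha G w

/-- The closed neighborhood `N[v]` of a vertex. -/
def closedNbhd {V : Type*} (G : SimpleGraph V) (v : V) : Set V :=
  insert v (G.neighborSet v)

/-- The open neighborhood `N(S)` of a set of vertices. -/
def setNbhd {V : Type*} (G : SimpleGraph V) (S : Set V) : Set V :=
  (⋃ s ∈ S, G.neighborSet s) \ S

/-- The closed neighborhood `N[S]` of a set of vertices. -/
def closedSetNbhd {V : Type*} (G : SimpleGraph V) (S : Set V) : Set V :=
  setNbhd G S ∪ S

/-! An independent set of `G` meets the clique `N[v]` in at most one vertex, whose weight is at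
most `ω(v)`; the rest of it lies in `G − N[v]`. Conversely, `v` can be added to any independent
set of `G − N[v]`. -/

section IndepSet

variable {V : Type*} {G : SimpleGraph V}

lemma IsIndepSet.mono {S T : Finset V} (hS : IsIndepSet G S) (hTS : T ⊆ S) : IsIndepSet G T :=
  fun a ha b hb => hS a (hTS ha) b (hTS hb)

lemma IsIndepSet.insert_of_subset_compl_closedNbhd {S : Finset V} {v : V} (hS : IsIndepSet G S)
    (hSv : ↑S ⊆ (closedNbhd G v)ᶜ) : IsIndepSet G (insert v S) := by
  have hv_nadj : ∀ b ∈ S, ¬ G.Adj v b := fun b hb hvb => hSv hb (Or.inr hvb)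
  simp only [IsIndepSet, Finset.mem_insert]
  rintro a (rfl | ha) b (rfl | hb)
  · exact G.loopless.irrefl _
  · exact hv_nadj b hb
  · exact fun hab => hv_nadj a ha hab.symm
  · exact hS a ha b hb

lemma IsIndepSet.card_le_one_of_isClique {S : Finset V} {K : Set V} (hS : IsIndepSet G S)
    (hK : G.IsClique K) (hSK : ↑S ⊆ K) : S.card ≤ 1 :=
  Finset.card_le_one.2 fun a ha b hb =>
    by_contra fun hab => hS a ha b hb (hK (hSK ha) (hSK hb) hab)

lemma IsIndepSet.sum_le_of_isClique {S : Finset V} {K : Set V} (hS : IsIndepSet G S)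
    (hK : G.IsClique K) (hSK : ↑S ⊆ K) {w : V → ℝ} {m : ℝ} (hm : 0 ≤ m)
    (hwm : ∀ u ∈ K, w u ≤ m) : ∑ u ∈ S, w u ≤ m :=
  calc ∑ u ∈ S, w u ≤ S.card • m := Finset.sum_le_card_nsmul S w m fun u hu => hwm u (hSK hu)
    _ ≤ 1 • m := nsmul_le_nsmul_left hm (hS.card_le_one_of_isClique hK hSK)
    _ = m := one_smul ℕ m

lemma SimpleGraph.IsClique.closedNbhd {v : V} (h : G.IsClique (G.neighborSet v)) :
    G.IsClique (closedNbhd G v) :=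
  h.insert fun _ hu _ => hu

end IndepSet

section Alpha

variable {V : Type*} [Fintype V] (G : SimpleGraph V) (w : V → ℝ)

lemma sum_le_alphaOn {A : Set V} {S : Finset V} (hSA : ↑S ⊆ A) (hS : IsIndepSet G S) :
    ∑ v ∈ S, w v ≤ alphaOn G w A := by
  refine le_csSup ⟨∑ v, |w v|, ?_⟩ ⟨S, hSA, hS, rfl⟩
  rintro x ⟨T, -, -, rfl⟩
  exact (Finset.sum_le_sum fun v _ => le_abs_self (w v)).trans
    (Finset.sum_le_univ_sum_of_nonneg fun v => abs_nonneg (w v))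

lemma alphaOn_le {A : Set V} {c : ℝ}
    (h : ∀ S : Finset V, ↑S ⊆ A → IsIndepSet G S → ∑ v ∈ S, w v ≤ c) : alphaOn G w A ≤ c := by
  refine csSup_le ⟨0, ∅, by simp, fun a ha => by simp at ha, by simp⟩ ?_
  rintro x ⟨S, hSA, hS, rfl⟩
  exact h S hSA hS

lemma alphaOn_compl_closedNbhd_add_le_alpha (v : V) :
    alphaOn G w (closedNbhd G v)ᶜ + w v ≤ alpha G w := by
  suffices alphaOn G w (closedNbhd G v)ᶜ ≤ alpha G w - w v by linarith
  refine alphaOn_le G w fun S hSv hS => ?_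
  have hvS : v ∉ S := fun h => hSv h (Set.mem_insert v _)
  have := sum_le_alphaOn G w (Set.subset_univ _) (hS.insert_of_subset_compl_closedNbhd hSv)
  rw [Finset.sum_insert hvS] at this
  unfold alpha
  linarith

lemma alpha_le_alphaOn_compl_closedNbhd_add {v : V} (hv : 0 ≤ w v)
    (hsimp : G.IsClique (G.neighborSet v)) (hwt : ∀ u ∈ G.neighborSet v, w u ≤ w v) :
    alpha G w ≤ alphaOn G w (closedNbhd G v)ᶜ + w v := by
  refine alphaOn_le G w fun S _ hS => ?_
  rw [← Finset.sum_filter_add_sum_filter_not S (· ∈ closedNbhd G v)]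
  have hin : ∑ u ∈ S with u ∈ closedNbhd G v, w u ≤ w v :=
    (hS.mono (Finset.filter_subset _ S)).sum_le_of_isClique hsimp.closedNbhd
      (fun u hu => (Finset.mem_filter.1 hu).2) hv
      (by rintro u (rfl | hu); exacts [le_rfl, hwt u hu])
  have hout : ∑ u ∈ S with u ∉ closedNbhd G v, w u ≤ alphaOn G w (closedNbhd G v)ᶜ :=
    sum_le_alphaOn G w (fun u hu => (Finset.mem_filter.1 hu).2)
      (hS.mono (Finset.filter_subset _ S))
  linarith

end Alpha

theorem stmt_18 {V : Type*} [Fintype V] (G : SimpleGraph V) (w : V → ℝ)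
    (hw : ∀ x, 0 < w x) (v : V)
    (hsimp : G.IsClique (G.neighborSet v))
    (hwt : ∀ u ∈ G.neighborSet v, w u ≤ w v) :
    alpha G w = alphaOn G w (closedNbhd G v)ᶜ + w v :=
  le_antisymm (alpha_le_alphaOn_compl_closedNbhd_add G w (hw v).le hsimp hwt)
    (alphaOn_compl_closedNbhd_add_le_alpha G w v)
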